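/- Let p be a prime, n a positive integer, and 1 ≤ m ≤ n. For a function f : 𝔽_p^n → 𝔽_p, the polynomial z^{p^m} − 1 divides the associated polynomial F(z) in ℂ[z] if and only if for every fixed tuple (a_1,...,a_m) ∈ 𝔽_p^m, Σ_{x ∈ 𝔽_p^n : x_i = a_i for 1 ≤ i ≤ m} ω^{f(x)} = 0. -/

import Mathlib

/-- `ω = exp(2π√-1/p)`, a primitive `p`-th root of unity in `ℂ`. -/
noncomputable def omegaC (p : ℕ) : ℂ := Complex.exp (2 * Real.pi * Complex.I / p)

/-- `ξ = exp(2π√-1/pⁿ)`, a primitive `pⁿ`-th root of unity in `ℂ`. -/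
noncomputable def xiC (p n : ℕ) : ℂ := Complex.exp (2 * Real.pi * Complex.I / (p ^ n : ℕ))

/-- The integer `k = Σ_{i=1}^n x_i p^{i-1}` whose `p`-adic digits are `x₁,…,xₙ`
(0-indexed here). -/
def idx {p n : ℕ} (x : Fin n → ZMod p) : ℕ := ∑ i : Fin n, (x i).val * p ^ (i : ℕ)

/-- The associated polynomial `F(z) = Σ_{k=0}^{pⁿ-1} ω^{f(k)} z^k
  = Σ_{x ∈ 𝔽ₚⁿ} ω^{f(x)} z^{idx x} ∈ ℂ[z]`. -/
noncomputable def assocPoly {p n : ℕ} [NeZero p] (f : (Fin n → ZMod p) → ZMod p) :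
    Polynomial ℂ :=
  ∑ x : Fin n → ZMod p, Polynomial.monomial (idx x) (omegaC p ^ (f x).val)

/-- Discrete Fourier transform over ℂ: `𝔉_f(j) = Σ_{k=0}^{pⁿ-1} ω^{f(k)} ξ^{-kj}`. -/
noncomputable def dft {p n : ℕ} [NeZero p] (f : (Fin n → ZMod p) → ZMod p) (j : ℕ) : ℂ :=
  ∑ x : Fin n → ZMod p, omegaC p ^ (f x).val * xiC p n ^ (-((idx x * j : ℕ) : ℤ))

/-- `f` is `m`-th order correlation-immune: for every `m`-subset `S` of the variable
indices, every assignment `a` of values on `S` and every `t`,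
`p^m ⬝ #{x : f x = t ∧ x∣_S = a∣_S} = #{x : f x = t}`. -/
def CorrImmune {p n : ℕ} [NeZero p] (f : (Fin n → ZMod p) → ZMod p) (m : ℕ) : Prop :=
  ∀ S : Finset (Fin n), S.card = m → ∀ a : Fin n → ZMod p, ∀ t : ZMod p,
    p ^ m * (Finset.univ.filter fun x : Fin n → ZMod p =>
        f x = t ∧ ∀ i ∈ S, x i = a i).card
      = (Finset.univ.filter fun x : Fin n → ZMod p => f x = t).card

/-- `f` is balanced: every output value is attained exactly `p^{n-1}` times. -/
def IsBalanced {p n : ℕ} [NeZero p] (f : (Fin n → ZMod p) → ZMod p) : Prop :=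
  ∀ t : ZMod p,
    (Finset.univ.filter fun x : Fin n → ZMod p => f x = t).card = p ^ (n - 1)

/-- `f` is `m`-resilient: `m`-th order correlation-immune and balanced. -/
def Resilient {p n : ℕ} [NeZero p] (f : (Fin n → ZMod p) → ZMod p) (m : ℕ) : Prop :=
  CorrImmune f m ∧ IsBalanced f

lemma idx_succ {p m : ℕ} (a : Fin (m + 1) → ZMod p) :
    idx a = (a 0).val + p * idx (Fin.tail a) := by
  unfold idx
  simp only [Fin.sum_univ_succ, Fin.val_zero, pow_zero, mul_one, Finset.mul_sum, Fin.tail]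
  congr 1
  refine Finset.sum_congr rfl fun i _ => ?_
  rw [Fin.val_succ, pow_succ]
  ring

lemma idx_lt {p : ℕ} [NeZero p] : ∀ {m : ℕ} (a : Fin m → ZMod p), idx a < p ^ m := by
  intro m
  induction m with
  | zero => intro a; simp [idx]
  | succ m ih =>
    intro a
    rw [idx_succ]
    have h1 : (a 0).val < p := ZMod.val_lt _
    have h2 := ih (Fin.tail a)
    calc (a 0).val + p * idx (Fin.tail a) < p + p * idx (Fin.tail a) := by omega
      _ = p * (idx (Fin.tail a) + 1) := by ring
      _ ≤ p * p ^ m := Nat.mul_le_mul_left p h2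
      _ = p ^ (m + 1) := by rw [pow_succ]; ring

lemma idx_injective {p : ℕ} [NeZero p] :
    ∀ {m : ℕ}, Function.Injective (idx (p := p) (n := m)) := by
  intro m
  induction m with
  | zero => intro a b _; funext i; exact i.elim0
  | succ m ih =>
    intro a b h
    rw [idx_succ, idx_succ] at h
    have hp : 0 < p := Nat.pos_of_ne_zero (NeZero.ne p)
    have ha : (a 0).val < p := ZMod.val_lt _
    have hb : (b 0).val < p := ZMod.val_lt _
    have h0 : (a 0).val = (b 0).val := by
      have e1 : ((a 0).val + p * idx (Fin.tail a)) % p = (a 0).val := by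
        rw [Nat.add_mul_mod_self_left, Nat.mod_eq_of_lt ha]
      have e2 : ((b 0).val + p * idx (Fin.tail b)) % p = (b 0).val := by
        rw [Nat.add_mul_mod_self_left, Nat.mod_eq_of_lt hb]
      rw [← e1, ← e2, h]
    have htail : idx (Fin.tail a) = idx (Fin.tail b) := by
      have : p * idx (Fin.tail a) = p * idx (Fin.tail b) := by omega
      exact Nat.eq_of_mul_eq_mul_left hp this
    have h0' : a 0 = b 0 := ZMod.val_injective p h0
    have htail' := ih htail
    funext i
    refine Fin.cases ?_ ?_ i
    · exact h0'
    · intro j; exact congrFun htail' j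

lemma idx_mod {p n m : ℕ} [NeZero p] (hmn : m ≤ n) (x : Fin n → ZMod p) :
    idx x % p ^ m = idx fun i : Fin m => x (Fin.castLE hmn i) := by
  set g : ℕ → ℕ := fun i => (if h : i < n then (x ⟨i, h⟩).val else 0) * p ^ i with hg
  have hx : idx x = ∑ i ∈ Finset.range n, g i := by
    rw [idx, ← Fin.sum_univ_eq_sum_range]
    refine Finset.sum_congr rfl fun i _ => ?_
    simp [hg, i.isLt]
  have hlow : idx (fun i : Fin m => x (Fin.castLE hmn i)) = ∑ i ∈ Finset.range m, g i := by
    rw [idx, ← Fin.sum_univ_eq_sum_range]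
    refine Finset.sum_congr rfl fun i _ => ?_
    have h1 : (i : ℕ) < n := lt_of_lt_of_le i.isLt hmn
    simp [hg, h1, Fin.castLE]
  have hsplit : ∑ i ∈ Finset.range m, g i + ∑ i ∈ Finset.Ico m n, g i
      = ∑ i ∈ Finset.range n, g i := by
    rw [Finset.range_eq_Ico, Finset.range_eq_Ico]
    exact Finset.sum_Ico_consecutive g (Nat.zero_le m) hmn
  have hdvd : p ^ m ∣ ∑ i ∈ Finset.Ico m n, g i := by
    refine Finset.dvd_sum fun i hi => ?_
    exact Dvd.dvd.mul_left (pow_dvd_pow p (Finset.mem_Ico.mp hi).1) _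
  obtain ⟨c, hc⟩ := hdvd
  have hdecomp : idx x = ∑ i ∈ Finset.range m, g i + p ^ m * c := by rw [hx, ← hsplit, hc]
  rw [hdecomp, Nat.add_mul_mod_self_left, hlow, Nat.mod_eq_of_lt]
  rw [← hlow]
  exact idx_lt _

/-- `z^{p^m} - 1 ∣ F(z)` iff for every fixed tuple `(a₁,…,a_m) ∈ 𝔽ₚᵐ`,
`Σ_{x : xᵢ = aᵢ for 1 ≤ i ≤ m} ω^{f(x)} = 0`. -/
theorem pow_sub_one_dvd_assocPoly_iff_slice_sums_zero
    (p n m : ℕ) [Fact p.Prime] (hn : 0 < n) (hm : 1 ≤ m) (hmn : m ≤ n)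
    (f : (Fin n → ZMod p) → ZMod p) :
    (Polynomial.X ^ (p ^ m) - 1 : Polynomial ℂ) ∣ assocPoly f ↔
      ∀ a : Fin m → ZMod p,
        ∑ x ∈ (Finset.univ.filter fun x : Fin n → ZMod p =>
            ∀ i : Fin m, x (Fin.castLE hmn i) = a i), omegaC p ^ (f x).val = 0 := by
  classical
  have hp : 1 < p := (Fact.out : p.Prime).one_lt
  have : NeZero p := ⟨by omega⟩
  set q := p ^ m with hq
  have hq0 : 0 < q := pow_pos (by omega) m
  set R : Polynomial ℂ := ∑ x : Fin n → ZMod p,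
    Polynomial.monomial (idx x % q) (omegaC p ^ (f x).val) with hR
  have hdvd : (Polynomial.X ^ q - 1 : Polynomial ℂ) ∣ assocPoly f - R := by
    rw [assocPoly, hR, ← Finset.sum_sub_distrib]
    refine Finset.dvd_sum fun x _ => ?_
    set a := idx x with hax
    have hmono : (Polynomial.monomial a (omegaC p ^ (f x).val) -
        Polynomial.monomial (a % q) (omegaC p ^ (f x).val) : Polynomial ℂ)
        = Polynomial.C (omegaC p ^ (f x).val) *
          (Polynomial.X ^ a - Polynomial.X ^ (a % q)) := by
      rw [mul_sub, Polynomial.C_mul_X_pow_eq_monomial, Polynomial.C_mul_X_pow_eq_monomial]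
    rw [hmono]
    refine Dvd.dvd.mul_left ?_ _
    have key : (Polynomial.X ^ q - 1 : Polynomial ℂ) ∣ (Polynomial.X ^ q) ^ (a / q) - 1 := by
      simpa using sub_dvd_pow_sub_pow (Polynomial.X ^ q : Polynomial ℂ) 1 (a / q)
    have hdec : (Polynomial.X ^ a - Polynomial.X ^ (a % q) : Polynomial ℂ)
        = Polynomial.X ^ (a % q) * ((Polynomial.X ^ q) ^ (a / q) - 1) := by
      rw [mul_sub, mul_one, ← pow_mul, ← pow_add, Nat.mod_add_div]
    rw [hdec]
    exact key.mul_left _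
  have hiff : ((Polynomial.X ^ q - 1 : Polynomial ℂ) ∣ assocPoly f)
      ↔ ((Polynomial.X ^ q - 1 : Polynomial ℂ) ∣ R) := by
    constructor
    · intro h; simpa using dvd_sub h hdvd
    · intro h; simpa using hdvd.add h
  have hdeg : (Polynomial.X ^ q - 1 : Polynomial ℂ).degree = q := by
    simpa using Polynomial.degree_X_pow_sub_C hq0 (1 : ℂ)
  have hRdeg : R.degree < q := by
    rw [hR]
    refine lt_of_le_of_lt (Polynomial.degree_sum_le _ _) ?_
    rw [Finset.sup_lt_iff (by exact_mod_cast WithBot.bot_lt_coe q)]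
    intro x _
    exact lt_of_le_of_lt (Polynomial.degree_monomial_le _ _)
      (by exact_mod_cast Nat.mod_lt _ hq0)
  have hiff2 : ((Polynomial.X ^ q - 1 : Polynomial ℂ) ∣ R) ↔ R = 0 := by
    constructor
    · intro h; exact Polynomial.eq_zero_of_dvd_of_degree_lt h (hdeg ▸ hRdeg)
    · intro h; simp [h]
  have hcoeff : ∀ k, R.coeff k
      = ∑ x ∈ Finset.univ.filter (fun x : Fin n → ZMod p => idx x % q = k),
        omegaC p ^ (f x).val := by
    intro k
    rw [hR, Polynomial.finset_sum_coeff, Finset.sum_filter]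
    refine Finset.sum_congr rfl fun x _ => ?_
    rw [Polynomial.coeff_monomial]
  have hslice : ∀ a : Fin m → ZMod p,
      (Finset.univ.filter fun x : Fin n → ZMod p => idx x % q = idx a)
      = Finset.univ.filter fun x : Fin n → ZMod p =>
          ∀ i : Fin m, x (Fin.castLE hmn i) = a i := by
    intro a
    ext x
    simp only [Finset.mem_filter, Finset.mem_univ, true_and]
    rw [hq, idx_mod hmn]
    constructor
    · intro h i
      exact congrFun (idx_injective h) i
    · intro h
      congr 1
      funext i
      exact h i
  rw [hiff, hiff2]
  constructor
  · intro hR0 a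
    have hc := hcoeff (idx a)
    rw [hR0, Polynomial.coeff_zero] at hc
    rw [← hslice a]
    exact hc.symm
  · intro hs
    ext k
    rw [Polynomial.coeff_zero, hcoeff k]
    by_cases hne : (Finset.univ.filter fun x : Fin n → ZMod p => idx x % q = k).Nonempty
    · obtain ⟨x0, hx0⟩ := hne
      simp only [Finset.mem_filter, Finset.mem_univ, true_and] at hx0
      have hk : k = idx (fun i : Fin m => x0 (Fin.castLE hmn i)) := by
        rw [← hx0, hq, idx_mod hmn]
      rw [hk, hslice]
      exact hs _
    · rw [Finset.not_nonempty_iff_eq_empty] at hne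
      rw [hne, Finset.sum_empty]
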